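/- arXiv:1608.04761 — 3 statements merged into one kernel-verified Lean document; each statement's English description precedes it below -/
import Mathlib

section
/- Let P be a 2×2×2×2 complex tensor, and define Flat₁(P) as the 4×4 matrix with rows indexed by (i₁,i₂) and columns by (i₃,i₄), entries p_{i₁i₂i₃i₄}. Define Flat₁'(P) = (h^T⊗h^T)·Flat₁(P)·(h⊗h) with h = (1/√2)[[1,1],[-1,1]], and q₁(P) = det of the bottom-right 3×3 submatrix of Flat₁'(P). Then for any matrices M₁,M₂,M₃,M₄ in the Markov group M₂ (invertible, column sums 1), and P' the tensor with entries p'_{ijkl} = Σ_{i',j',k',l'} (M₁)_{ii'}(M₂)_{jj'}(M₃)_{kk'}(M₄)_{ll'} p_{i'j'k'l'}, one has q₁(P') = det(M₁)det(M₂)det(M₃)det(M₄) · q₁(P). -/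
open Matrix

noncomputable def h : Matrix (Fin 2) (Fin 2) ℂ :=
  (Real.sqrt 2 : ℂ)⁻¹ • !![1, 1; -1, 1]

def fst4 (k : Fin 4) : Fin 2 := ⟨k.val / 2, by omega⟩
def snd4 (k : Fin 4) : Fin 2 := ⟨k.val % 2, by omega⟩

/-- Kronecker product of two `2 × 2` matrices as a `4 × 4` matrix, rows/columns
ordered as `00, 01, 10, 11`. -/
def kron4 (A B : Matrix (Fin 2) (Fin 2) ℂ) : Matrix (Fin 4) (Fin 4) ℂ :=
  Matrix.of fun r c => A (fst4 r) (fst4 c) * B (snd4 r) (snd4 c)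

/-- A `2 × 2 × 2 × 2` complex tensor. -/
abbrev Tensor := Fin 2 → Fin 2 → Fin 2 → Fin 2 → ℂ

/-- The `12|34` flattening of a tensor. -/
def Flat1 (P : Tensor) : Matrix (Fin 4) (Fin 4) ℂ :=
  Matrix.of fun r c => P (fst4 r) (snd4 r) (fst4 c) (snd4 c)

/-- Bottom-right `3 × 3` submatrix of a `4 × 4` matrix. -/
def sub3 (M : Matrix (Fin 4) (Fin 4) ℂ) : Matrix (Fin 3) (Fin 3) ℂ :=
  Matrix.of fun i j => M i.succ j.succ

/-- The binary squangle `q₁`. -/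
noncomputable def q1 (P : Tensor) : ℂ :=
  (sub3 (kron4 hᵀ hᵀ * Flat1 P * kron4 h h)).det

def MarkovSet : Set (Matrix (Fin 2) (Fin 2) ℂ) :=
  {M | (∃ a b : ℂ, M = !![1 - a, b; a, 1 - b]) ∧ M.det ≠ 0}

-- auxiliary lemmas
lemma fst4_0 : fst4 0 = 0 := rfl
lemma fst4_1 : fst4 1 = 0 := rfl
lemma fst4_2 : fst4 2 = 1 := rfl
lemma fst4_3 : fst4 3 = 1 := rfl
lemma snd4_0 : snd4 0 = 0 := rfl
lemma snd4_1 : snd4 1 = 1 := rfl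
lemma snd4_2 : snd4 2 = 0 := rfl
lemma snd4_3 : snd4 3 = 1 := rfl

lemma kron4_mul (A B C D : Matrix (Fin 2) (Fin 2) ℂ) :
    kron4 A B * kron4 C D = kron4 (A * C) (B * D) := by
  ext r c
  simp [kron4, mul_apply, Fin.sum_univ_four, Fin.sum_univ_two,
    fst4_0, fst4_1, fst4_2, fst4_3, snd4_0, snd4_1, snd4_2, snd4_3]
  ring

lemma kron4_transpose (A B : Matrix (Fin 2) (Fin 2) ℂ) :
    (kron4 A B)ᵀ = kron4 Aᵀ Bᵀ := by
  ext r c; simp [kron4, transpose_apply]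

lemma kron4_one : kron4 1 1 = 1 := by
  ext r c
  fin_cases r <;> fin_cases c <;>
    simp [kron4, fst4_0, fst4_1, fst4_2, fst4_3, snd4_0, snd4_1, snd4_2, snd4_3,
      Matrix.one_apply]

lemma sqrt2_sq : ((Real.sqrt 2 : ℂ))⁻¹ * ((Real.sqrt 2 : ℂ))⁻¹ = 2⁻¹ := by
  rw [← mul_inv]
  have : (Real.sqrt 2 : ℂ) * (Real.sqrt 2 : ℂ) = 2 := by
    push_cast [← Complex.ofReal_mul, Real.mul_self_sqrt (by norm_num : (0:ℝ) ≤ 2)]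
    norm_num
  rw [this]

lemma h_orth : hᵀ * h = 1 := by
  rw [h, transpose_smul, Matrix.smul_mul, Matrix.mul_smul, smul_smul, sqrt2_sq]
  have ht : (!![1, 1; -1, 1] : Matrix (Fin 2) (Fin 2) ℂ)ᵀ = !![1, -1; 1, 1] := by
    ext i j; fin_cases i <;> fin_cases j <;> rfl
  have : (!![1, 1; -1, 1] : Matrix (Fin 2) (Fin 2) ℂ)ᵀ * !![1, 1; -1, 1] = (2:ℂ) • 1 := by
    rw [ht]
    ext i j
    fin_cases i <;> fin_cases j <;>
      simp [mul_apply, Fin.sum_univ_two, Matrix.one_apply] <;> norm_num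
  rw [this, smul_smul]
  norm_num

lemma h_orth' : h * hᵀ = 1 := mul_eq_one_comm.mp h_orth

lemma markov_conj {M : Matrix (Fin 2) (Fin 2) ℂ} (hM : M ∈ MarkovSet) :
    ∃ x : ℂ, hᵀ * M * h = !![M.det, x; 0, 1] := by
  obtain ⟨⟨a, b, rfl⟩, -⟩ := hM
  refine ⟨b - a, ?_⟩
  have hd : (!![1 - a, b; a, 1 - b] : Matrix (Fin 2) (Fin 2) ℂ).det = 1 - a - b := by
    simp [Matrix.det_fin_two_of]; ring
  rw [hd, h, transpose_smul, Matrix.smul_mul, Matrix.smul_mul, Matrix.mul_smul,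
    smul_smul, sqrt2_sq]
  have ht : (!![1, 1; -1, 1] : Matrix (Fin 2) (Fin 2) ℂ)ᵀ = !![1, -1; 1, 1] := by
    ext i j; fin_cases i <;> fin_cases j <;> rfl
  rw [ht]
  ext i j
  fin_cases i <;> fin_cases j <;>
    simp [mul_apply, Fin.sum_univ_two] <;> ring

lemma flat1_rel (P P' : Tensor) (M1 M2 M3 M4 : Matrix (Fin 2) (Fin 2) ℂ)
    (hP' : ∀ i j k l, P' i j k l =
      ∑ i' : Fin 2, ∑ j' : Fin 2, ∑ k' : Fin 2, ∑ l' : Fin 2,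
        M1 i i' * M2 j j' * M3 k k' * M4 l l' * P i' j' k' l') :
    Flat1 P' = kron4 M1 M2 * Flat1 P * (kron4 M3 M4)ᵀ := by
  ext r c
  show P' (fst4 r) (snd4 r) (fst4 c) (snd4 c) = _
  rw [hP']
  simp [mul_apply, kron4, Flat1, transpose_apply, Fin.sum_univ_four, Fin.sum_univ_two,
    fst4_0, fst4_1, fst4_2, fst4_3, snd4_0, snd4_1, snd4_2, snd4_3]
  ring

lemma sub3_mul_mul (L A R : Matrix (Fin 4) (Fin 4) ℂ)
    (hL : ∀ i, i ≠ 0 → L i 0 = 0) (hR : ∀ j, j ≠ 0 → R 0 j = 0) :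
    sub3 (L * A * R) = sub3 L * sub3 A * sub3 R := by
  ext i j
  have h1 : L i.succ 0 = 0 := hL _ (Fin.succ_ne_zero i)
  have h2 : R 0 j.succ = 0 := hR _ (Fin.succ_ne_zero j)
  have e0 : (0 : Fin 3).succ = (1 : Fin 4) := rfl
  have e1 : (1 : Fin 3).succ = (2 : Fin 4) := rfl
  have e2 : (2 : Fin 3).succ = (3 : Fin 4) := rfl
  simp [sub3, mul_apply, Fin.sum_univ_four, Fin.sum_univ_three, h1, h2, e0, e1, e2]

lemma tri_col (d1 x d2 y : ℂ) :
    ∀ i : Fin 4, i ≠ 0 → kron4 !![d1, x; 0, 1] !![d2, y; 0, 1] i 0 = 0 := by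
  intro i hi
  fin_cases i
  · exact absurd rfl hi
  all_goals simp [kron4, fst4_0, fst4_1, fst4_2, fst4_3, snd4_0, snd4_1, snd4_2, snd4_3]

lemma tri_row (d1 x d2 y : ℂ) :
    ∀ j : Fin 4, j ≠ 0 → kron4 !![d1, 0; x, 1] !![d2, 0; y, 1] 0 j = 0 := by
  intro j hj
  fin_cases j
  · exact absurd rfl hj
  all_goals simp [kron4, fst4_0, fst4_1, fst4_2, fst4_3, snd4_0, snd4_1, snd4_2, snd4_3]

lemma det_sub3_ut (d1 x d2 y : ℂ) :
    (sub3 (kron4 !![d1, x; 0, 1] !![d2, y; 0, 1])).det = d1 * d2 := by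
  have e0 : (0 : Fin 3).succ = (1 : Fin 4) := rfl
  have e1 : (1 : Fin 3).succ = (2 : Fin 4) := rfl
  have e2 : (2 : Fin 3).succ = (3 : Fin 4) := rfl
  simp [sub3, kron4, Matrix.det_fin_three, e0, e1, e2,
    fst4_0, fst4_1, fst4_2, fst4_3, snd4_0, snd4_1, snd4_2, snd4_3]

lemma det_sub3_lt (d1 x d2 y : ℂ) :
    (sub3 (kron4 !![d1, 0; x, 1] !![d2, 0; y, 1])).det = d1 * d2 := by
  have e0 : (0 : Fin 3).succ = (1 : Fin 4) := rfl
  have e1 : (1 : Fin 3).succ = (2 : Fin 4) := rfl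
  have e2 : (2 : Fin 3).succ = (3 : Fin 4) := rfl
  simp [sub3, kron4, Matrix.det_fin_three, e0, e1, e2,
    fst4_0, fst4_1, fst4_2, fst4_3, snd4_0, snd4_1, snd4_2, snd4_3]

lemma tr_tri (d x : ℂ) : (!![d, x; 0, 1] : Matrix (Fin 2) (Fin 2) ℂ)ᵀ = !![d, 0; x, 1] := by
  ext i j; fin_cases i <;> fin_cases j <;> rfl

lemma conj_transpose_h (M : Matrix (Fin 2) (Fin 2) ℂ) :
    hᵀ * Mᵀ * h = (hᵀ * M * h)ᵀ := by
  rw [transpose_mul, transpose_mul, transpose_transpose, Matrix.mul_assoc]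

/-- The squangle `q₁` is a Markov invariant: under the Markov action of four
matrices of the Markov group on a tensor `P`, `q₁` scales by the product of the
determinants. -/
theorem q1_markov_invariant (P P' : Tensor)
    (M1 M2 M3 M4 : Matrix (Fin 2) (Fin 2) ℂ)
    (hM1 : M1 ∈ MarkovSet) (hM2 : M2 ∈ MarkovSet)
    (hM3 : M3 ∈ MarkovSet) (hM4 : M4 ∈ MarkovSet)
    (hP' : ∀ i j k l, P' i j k l =
      ∑ i' : Fin 2, ∑ j' : Fin 2, ∑ k' : Fin 2, ∑ l' : Fin 2,
        M1 i i' * M2 j j' * M3 k k' * M4 l l' * P i' j' k' l') :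
    q1 P' = M1.det * M2.det * M3.det * M4.det * q1 P := by
  obtain ⟨x1, hT1⟩ := markov_conj hM1
  obtain ⟨x2, hT2⟩ := markov_conj hM2
  obtain ⟨x3, hT3⟩ := markov_conj hM3
  obtain ⟨x4, hT4⟩ := markov_conj hM4
  have hcol : kron4 h h * kron4 hᵀ hᵀ = 1 := by rw [kron4_mul, h_orth', kron4_one]
  have cancel : ∀ X : Matrix (Fin 4) (Fin 4) ℂ, kron4 h h * (kron4 hᵀ hᵀ * X) = X := by
    intro X; rw [← Matrix.mul_assoc, hcol, Matrix.one_mul]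
  simp only [q1]
  set L := kron4 (hᵀ * M1 * h) (hᵀ * M2 * h) with hLdef
  set A := kron4 hᵀ hᵀ * Flat1 P * kron4 h h with hAdef
  set R := kron4 (hᵀ * M3ᵀ * h) (hᵀ * M4ᵀ * h) with hRdef
  have hmain : kron4 hᵀ hᵀ * Flat1 P' * kron4 h h = L * A * R := by
    rw [flat1_rel P P' M1 M2 M3 M4 hP', kron4_transpose, hLdef, hAdef, hRdef]
    rw [show kron4 (hᵀ * M1 * h) (hᵀ * M2 * h)
          = kron4 hᵀ hᵀ * kron4 M1 M2 * kron4 h h from by rw [kron4_mul, kron4_mul],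
        show kron4 (hᵀ * M3ᵀ * h) (hᵀ * M4ᵀ * h)
          = kron4 hᵀ hᵀ * kron4 M3ᵀ M4ᵀ * kron4 h h from by rw [kron4_mul, kron4_mul]]
    simp only [Matrix.mul_assoc, cancel]
  have hL1 : L = kron4 !![M1.det, x1; 0, 1] !![M2.det, x2; 0, 1] := by
    rw [hLdef, hT1, hT2]
  have hR1 : R = kron4 !![M3.det, 0; x3, 1] !![M4.det, 0; x4, 1] := by
    rw [hRdef, conj_transpose_h, conj_transpose_h, hT3, hT4, tr_tri, tr_tri]
  rw [hmain, sub3_mul_mul L A R (by rw [hL1]; exact tri_col _ _ _ _)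
      (by rw [hR1]; exact tri_row _ _ _ _), Matrix.det_mul, Matrix.det_mul,
    hL1, hR1, det_sub3_ut, det_sub3_lt]
  ring
end

section
/- With q₁ defined as the determinant of the bottom-right 3×3 submatrix of (h^T⊗h^T)·Flat₁(P)·(h⊗h), the squangle q₁ vanishes on every tree tensor arising from the quartet 12|34; that is, if P has the form p_{ijkl} = Σ_{x,y,r} m¹_{ix} m²_{jx} m³_{ky} m⁴_{ly} m¹²_{xr} m³⁴_{yr} π_r for arbitrary 2×2 matrices m¹,...,m³⁴ and vector π, then q₁(P) = 0. -/
open Matrix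

/-- The squangle `q₁` vanishes on every tree tensor arising from the quartet
`12|34`. -/
theorem q1_vanishes_on_tree_tensor
    (m1 m2 m3 m4 m12 m34 : Matrix (Fin 2) (Fin 2) ℂ) (p0 : Fin 2 → ℂ)
    (P : Tensor)
    (hP : ∀ i j k l, P i j k l =
      ∑ x : Fin 2, ∑ y : Fin 2, ∑ r : Fin 2,
        m1 i x * m2 j x * m3 k y * m4 l y * m12 x r * m34 y r * p0 r) :
    q1 P = 0 := by
  -- left/right factors
  set L : Matrix (Fin 4) (Fin 4) ℂ := kron4 hᵀ hᵀ with hL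
  set R : Matrix (Fin 4) (Fin 4) ℂ := kron4 h h with hR
  -- rank-2 middle data
  let C : Fin 2 → Fin 2 → ℂ := fun x y => ∑ r, m12 x r * m34 y r * p0 r
  let u : Fin 4 → Fin 2 → ℂ := fun a x => m1 (fst4 a) x * m2 (snd4 a) x
  let v : Fin 4 → Fin 2 → ℂ := fun b y => m3 (fst4 b) y * m4 (snd4 b) y
  let A : Matrix (Fin 3) (Fin 3) ℂ :=
    Matrix.of fun i j =>
      ![∑ a : Fin 4, L i.succ a * u a 0, ∑ a : Fin 4, L i.succ a * u a 1, 0] j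
  let B : Matrix (Fin 3) (Fin 3) ℂ :=
    Matrix.of fun j k =>
      ![∑ y : Fin 2, C 0 y * ∑ b : Fin 4, v b y * R b k.succ,
        ∑ y : Fin 2, C 1 y * ∑ b : Fin 4, v b y * R b k.succ, 0] j
  have key : sub3 (L * Flat1 P * R) = A * B := by
    ext i k
    simp only [sub3, Matrix.of_apply, Matrix.mul_apply, Flat1, hP, A, B, C, u, v,
      Fin.sum_univ_four, Fin.sum_univ_three, Fin.sum_univ_two,
      Matrix.cons_val_zero, Matrix.cons_val_one, Matrix.head_cons,
      Matrix.cons_val_two, Matrix.tail_cons]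
    ring
  have hAcol : ∀ i, A i 2 = 0 := by
    intro i
    simp [A]
  unfold q1
  rw [← hL, ← hR, key, Matrix.det_mul,
    Matrix.det_eq_zero_of_column_eq_zero 2 hAcol, zero_mul]
end

section
/- Define the three squangles q₁(P) = det of the bottom-right 3×3 submatrix of (h^T⊗h^T)·Flat₁(P)·(h⊗h), q₂(P) = −q₁((23)·P), and q₃(P) = −q₁((24)·P), where (σ)·P permutes tensor indices. Then q₁(P) + q₂(P) + q₃(P) = 0 as a polynomial identity in the 16 entries of P. -/
open Matrix

/-- Action of a permutation `σ ∈ S₄` on tensors: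
`(σ·P)_{i₁i₂i₃i₄} = p_{i_{σ(1)} i_{σ(2)} i_{σ(3)} i_{σ(4)}}`. -/
def act (σ : Equiv.Perm (Fin 4)) (P : Tensor) : Tensor :=
  fun i0 i1 i2 i3 =>
    P (![i0, i1, i2, i3] (σ 0)) (![i0, i1, i2, i3] (σ 1))
      (![i0, i1, i2, i3] (σ 2)) (![i0, i1, i2, i3] (σ 3))

/-- The squangle `q₂ := -q₁((23)·P)`. -/
noncomputable def q2 (P : Tensor) : ℂ := -q1 (act (Equiv.swap 1 2) P)

/-- The squangle `q₃ := -q₁((24)·P)`. -/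
noncomputable def q3 (P : Tensor) : ℂ := -q1 (act (Equiv.swap 1 3) P)

/-- The 4-cycle `(1324)` (in 1-indexed notation), i.e. `0 ↦ 2, 2 ↦ 1, 1 ↦ 3, 3 ↦ 0`. -/
def c1324 : Equiv.Perm (Fin 4) := Equiv.swap 0 2 * Equiv.swap 2 1 * Equiv.swap 1 3

/-- The 4-cycle `(1423)` (in 1-indexed notation), i.e. `0 ↦ 3, 3 ↦ 1, 1 ↦ 2, 2 ↦ 0`. -/
def c1423 : Equiv.Perm (Fin 4) := Equiv.swap 0 3 * Equiv.swap 3 1 * Equiv.swap 1 2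

/-- Membership in the stabilizer `Stab(T₁)` of the quartet `12|34`, listed as the
eight explicit permutations `{e,(12),(34),(12)(34),(13)(24),(14)(23),(1324),(1423)}`. -/
def InStab1 (σ : Equiv.Perm (Fin 4)) : Prop :=
  σ = 1 ∨ σ = Equiv.swap 0 1 ∨ σ = Equiv.swap 2 3 ∨
  σ = Equiv.swap 0 1 * Equiv.swap 2 3 ∨ σ = Equiv.swap 0 2 * Equiv.swap 1 3 ∨
  σ = Equiv.swap 0 3 * Equiv.swap 1 2 ∨ σ = c1324 ∨ σ = c1423

lemma sw12_0 : Equiv.swap (1:Fin 4) 2 0 = 0 := by decide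
lemma sw12_1 : Equiv.swap (1:Fin 4) 2 1 = 2 := by decide
lemma sw12_2 : Equiv.swap (1:Fin 4) 2 2 = 1 := by decide
lemma sw12_3 : Equiv.swap (1:Fin 4) 2 3 = 3 := by decide
lemma sw13_0 : Equiv.swap (1:Fin 4) 3 0 = 0 := by decide
lemma sw13_1 : Equiv.swap (1:Fin 4) 3 1 = 3 := by decide
lemma sw13_2 : Equiv.swap (1:Fin 4) 3 2 = 2 := by decide
lemma sw13_3 : Equiv.swap (1:Fin 4) 3 3 = 1 := by decide
lemma vecf_0 (a b c d : Fin 2) : ![a,b,c,d] (0 : Fin 4) = a := rfl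
lemma vecf_1 (a b c d : Fin 2) : ![a,b,c,d] (1 : Fin 4) = b := rfl
lemma vecf_2 (a b c d : Fin 2) : ![a,b,c,d] (2 : Fin 4) = c := rfl
lemma vecf_3 (a b c d : Fin 2) : ![a,b,c,d] (3 : Fin 4) = d := rfl

lemma succ0 : (0 : Fin 3).succ = 1 := rfl
lemma succ1 : (1 : Fin 3).succ = 2 := rfl
lemma succ2 : (2 : Fin 3).succ = 3 := rfl
set_option maxHeartbeats 16000000 in
/-- The linear dependency `q₁ + q₂ + q₃ = 0` holds identically. -/
theorem squangle_sum_zero (P : Tensor) : q1 P + q2 P + q3 P = 0 := by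
  simp only [q1, q2, q3, act, sub3, kron4, Flat1, h, Matrix.det_fin_three, Matrix.mul_apply,
    Fin.sum_univ_four, Matrix.of_apply, Matrix.smul_apply, smul_eq_mul,
    sw12_0, sw12_1, sw12_2, sw12_3, sw13_0, sw13_1, sw13_2, sw13_3,
    vecf_0, vecf_1, vecf_2, vecf_3, succ0, succ1, succ2, fst4_0, fst4_1, fst4_2, fst4_3, snd4_0, snd4_1, snd4_2, snd4_3]
  norm_num [Fin.ext_iff, Matrix.cons_val_zero, Matrix.cons_val_one, Matrix.head_cons,
    Matrix.cons_val', Matrix.empty_val', Matrix.cons_val_fin_one, Matrix.head_fin_const]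
  ring
end
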